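/- arXiv:1304.3733 — 7 statements merged into one kernel-verified Lean document; each statement's English description precedes it below -/
import Mathlib

section
/- Let p ∈ ℂ⁴ be a unit vector, let {u₁,u₂} be an orthonormal basis of ℂ², and let {v₁,v₂} and {v'₁,v'₂} be two orthonormal bases of ℂ². Then for each i ∈ {1,2}: |⟨u_i ⊗ v₁, p⟩|² + |⟨u_i ⊗ v₂, p⟩|² = |⟨u_i ⊗ v'₁, p⟩|² + |⟨u_i ⊗ v'₂, p⟩|². That is, a product measurement satisfies the marginal distribution law in every state (Theorem 3 of the paper). -/
open scoped InnerProductSpace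
open Matrix

noncomputable section

/-- `ℂ²` as a Hilbert space. -/
abbrev C2 : Type := EuclideanSpace ℂ (Fin 2)

/-- `ℂ⁴` as a Hilbert space. -/
abbrev C4 : Type := EuclideanSpace ℂ (Fin 4)

/-- Kronecker product of vectors: `(x ⊗ y)_(2i+j) = xᵢ · yⱼ`. -/
def vKron (x y : C2) : C4 :=
  (WithLp.equiv 2 (Fin 4 → ℂ)).symm fun k =>
    x (⟨k.val / 2, by omega⟩ : Fin 2) * y (⟨k.val % 2, by omega⟩ : Fin 2)

/-- Kronecker product of 2×2 matrices as a 4×4 matrix. -/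
def mKron (M N : Matrix (Fin 2) (Fin 2) ℂ) : Matrix (Fin 4) (Fin 4) ℂ :=
  Matrix.of fun i j =>
    M (⟨i.val / 2, by omega⟩ : Fin 2) (⟨j.val / 2, by omega⟩ : Fin 2) *
      N (⟨i.val % 2, by omega⟩ : Fin 2) (⟨j.val % 2, by omega⟩ : Fin 2)

/-- The rank-one matrix `u · uᴴ` (`uu*`). -/
def rankOne {n : ℕ} (u : EuclideanSpace ℂ (Fin n)) : Matrix (Fin n) (Fin n) ℂ :=
  Matrix.of fun i j => u i * star (u j)

/-- The vector `(a, b, c, d) ∈ ℂ⁴`. -/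
def vec4 (a b c d : ℂ) : C4 :=
  (WithLp.equiv 2 (Fin 4 → ℂ)).symm ![a, b, c, d]

/-!
Since `⟪x ⊗ w, p⟫ = ⟪w, (x* ⊗ 1) p⟫`, both sides are Parseval sums of the single vector
`(uᵢ* ⊗ 1) p ∈ ℂ²`, in the bases `v` and `v'` respectively; each equals `‖(uᵢ* ⊗ 1) p‖²`.
-/

theorem Orthonormal.sum_sq_norm_inner_right_of_card_eq_finrank {𝕜 E ι : Type*} [RCLike 𝕜]
    [NormedAddCommGroup E] [InnerProductSpace 𝕜 E] [FiniteDimensional 𝕜 E] [Fintype ι]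
    {v : ι → E} (hv : Orthonormal 𝕜 v) (hcard : Fintype.card ι = Module.finrank 𝕜 E) (x : E) :
    ∑ i, ‖⟪v i, x⟫_𝕜‖ ^ 2 = ‖x‖ ^ 2 := by
  simpa using (OrthonormalBasis.mk hv
    (hv.linearIndependent.span_eq_top_of_card_eq_finrank' hcard).ge).sum_sq_norm_inner_right x

def partialInnerLeft (x : C2) (p : C4) : C2 :=
  WithLp.toLp 2 fun b => ∑ a : Fin 2, star (x a) * p ⟨2 * a.val + b.val, by omega⟩

theorem inner_vKron_eq_inner_partialInnerLeft (x w : C2) (p : C4) :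
    ⟪vKron x w, p⟫_ℂ = ⟪w, partialInnerLeft x p⟫_ℂ := by
  simp only [PiLp.inner_apply, Fin.sum_univ_four, Fin.sum_univ_two, vKron, partialInnerLeft,
    WithLp.equiv_symm_apply, RCLike.inner_apply, RCLike.star_def, map_mul, Fin.coe_ofNat_eq_mod,
    Nat.reduceDiv, Nat.reduceMod, Nat.reduceMul, Nat.reduceAdd, Fin.reduceFinMk]
  ring

theorem stmt_2_general (p : C4)
    (u v v' : Fin 2 → C2) (hv : Orthonormal ℂ v)
    (hv' : Orthonormal ℂ v') :
    ∀ i : Fin 2,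
      ∑ j : Fin 2, ‖⟪vKron (u i) (v j), p⟫_ℂ‖ ^ 2 =
        ∑ j : Fin 2, ‖⟪vKron (u i) (v' j), p⟫_ℂ‖ ^ 2 := by
  intro i
  have hcard : Fintype.card (Fin 2) = Module.finrank ℂ C2 := by simp
  simp only [inner_vKron_eq_inner_partialInnerLeft,
    hv.sum_sq_norm_inner_right_of_card_eq_finrank hcard,
    hv'.sum_sq_norm_inner_right_of_card_eq_finrank hcard]

/-- Theorem 3 of the paper: a product measurement satisfies the marginal distribution law
in every state. For a unit vector `p ∈ ℂ⁴`, an orthonormal basis `{u₁,u₂}` of `ℂ²` and two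
orthonormal bases `{v₁,v₂}`, `{v'₁,v'₂}` of `ℂ²`, for each `i`:
`|⟨uᵢ ⊗ v₁, p⟩|² + |⟨uᵢ ⊗ v₂, p⟩|² = |⟨uᵢ ⊗ v'₁, p⟩|² + |⟨uᵢ ⊗ v'₂, p⟩|²`. -/
theorem stmt_2 (p : C4) (hp : ‖p‖ = 1)
    (u v v' : Fin 2 → C2) (hu : Orthonormal ℂ u) (hv : Orthonormal ℂ v)
    (hv' : Orthonormal ℂ v') :
    ∀ i : Fin 2,
      ∑ j : Fin 2, ‖⟪vKron (u i) (v j), p⟫_ℂ‖ ^ 2 =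
        ∑ j : Fin 2, ‖⟪vKron (u i) (v' j), p⟫_ℂ‖ ^ 2 :=
  stmt_2_general p u v v' hv hv'
end
end

section
/- Consider a Bell setup on ℂ⁴ with orthonormal bases {a₁,a₂}, {a'₁,a'₂}, {b₁,b₂}, {b'₁,b'₂} of ℂ², a unit vector p ∈ ℂ⁴, and four coincidence measurements e_{AB}, e_{AB'}, e_{A'B}, e_{A'B'}, where each measurement is given by an orthonormal basis of ℂ⁴, and where measurement e_{XY} is called a product measurement if its basis is {xᵢ ⊗ yⱼ : i,j ∈ {1,2}} for the corresponding single-subsystem bases. If at least three of the four coincidence measurements are product measurements, then at least one of the four measurements satisfies the marginal distribution law in the state p with respect to each of its two partner measurements. Equivalently (Theorem 4 of the paper): if no measurement among e_{AB}, e_{AB'}, e_{A'B}, e_{A'B'} satisfies the marginal distribution law in the state p, then at least two of the four measurements are entangled (not product measurements). -/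
open scoped InnerProductSpace
open Matrix

noncomputable section

/-- The marginal distribution law in state `p` between two coincidence measurements
sharing the A-side (first index): for each `i`, `Σⱼ |⟨e(i,j), p⟩|² = Σⱼ |⟨f(i,j), p⟩|²`. -/
def MargA (p : C4) (e f : Fin 2 × Fin 2 → C4) : Prop :=
  ∀ i : Fin 2, ∑ j : Fin 2, ‖⟪e (i, j), p⟫_ℂ‖ ^ 2 = ∑ j : Fin 2, ‖⟪f (i, j), p⟫_ℂ‖ ^ 2

/-- The marginal distribution law in state `p` between two coincidence measurements
sharing the B-side (second index): for each `j`, `Σᵢ |⟨e(i,j), p⟩|² = Σᵢ |⟨f(i,j), p⟩|²`. -/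
def MargB (p : C4) (e f : Fin 2 × Fin 2 → C4) : Prop :=
  ∀ j : Fin 2, ∑ i : Fin 2, ‖⟪e (i, j), p⟫_ℂ‖ ^ 2 = ∑ i : Fin 2, ‖⟪f (i, j), p⟫_ℂ‖ ^ 2

/-- A coincidence measurement `e` is a product measurement with single-subsystem bases
`x`, `y` if its basis is `{xᵢ ⊗ yⱼ}`. -/
def IsProductMeas (e : Fin 2 × Fin 2 → C4) (x y : Fin 2 → C2) : Prop :=
  e = fun ij => vKron (x ij.1) (y ij.2)

/-! For a product vector the inner product factors through a partial inner product,
`⟪x ⊗ y, p⟫ = ⟪y, partialInnerA x p⟫`, so by Parseval `Σⱼ |⟪xᵢ ⊗ yⱼ, p⟫|² = ‖partialInnerA xᵢ p‖²`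
does not depend on the orthonormal basis `y` of the B-side (and symmetrically for the A-side).
Hence two product measurements sharing a side satisfy the marginal law in every state, and among
any three of the four measurements `AB, AB', A'B, A'B'` one has both of its partners among the
other two. -/

theorem Orthonormal.sum_sq_norm_inner_of_card_eq_finrank {ι 𝕜 E : Type*} [Fintype ι] [RCLike 𝕜]
    [NormedAddCommGroup E] [InnerProductSpace 𝕜 E] [FiniteDimensional 𝕜 E] {v : ι → E}
    (hv : Orthonormal 𝕜 v) (hcard : Fintype.card ι = Module.finrank 𝕜 E) (x : E) :
    ∑ i, ‖⟪v i, x⟫_𝕜‖ ^ 2 = ‖x‖ ^ 2 := by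
  simpa using (OrthonormalBasis.mk hv
    (hv.linearIndependent.span_eq_top_of_card_eq_finrank' hcard).ge).sum_sq_norm_inner_right x

def partialInnerA (x : C2) (p : C4) : C2 :=
  !₂[star (x 0) * p 0 + star (x 1) * p 2, star (x 0) * p 1 + star (x 1) * p 3]

def partialInnerB (y : C2) (p : C4) : C2 :=
  !₂[star (y 0) * p 0 + star (y 1) * p 1, star (y 0) * p 2 + star (y 1) * p 3]

theorem vKron_apply_zero (x y : C2) : vKron x y 0 = x 0 * y 0 := rfl
theorem vKron_apply_one (x y : C2) : vKron x y 1 = x 0 * y 1 := rfl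
theorem vKron_apply_two (x y : C2) : vKron x y 2 = x 1 * y 0 := rfl
theorem vKron_apply_three (x y : C2) : vKron x y 3 = x 1 * y 1 := rfl

theorem inner_vKron_eq_inner_partialInnerA (x y : C2) (p : C4) :
    ⟪vKron x y, p⟫_ℂ = ⟪y, partialInnerA x p⟫_ℂ := by
  simp only [PiLp.inner_apply, RCLike.inner_apply, Fin.sum_univ_four, Fin.sum_univ_two, map_mul,
    vKron_apply_zero, vKron_apply_one, vKron_apply_two, vKron_apply_three, partialInnerA,
    RCLike.star_def, cons_val_zero, cons_val_one, cons_val_fin_one]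
  ring

theorem inner_vKron_eq_inner_partialInnerB (x y : C2) (p : C4) :
    ⟪vKron x y, p⟫_ℂ = ⟪x, partialInnerB y p⟫_ℂ := by
  simp only [PiLp.inner_apply, RCLike.inner_apply, Fin.sum_univ_four, Fin.sum_univ_two, map_mul,
    vKron_apply_zero, vKron_apply_one, vKron_apply_two, vKron_apply_three, partialInnerB,
    RCLike.star_def, cons_val_zero, cons_val_one, cons_val_fin_one]
  ring

theorem margA_of_isProductMeas {p : C4} {e f : Fin 2 × Fin 2 → C4} {x y y' : Fin 2 → C2}
    (he : IsProductMeas e x y) (hf : IsProductMeas f x y')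
    (hy : Orthonormal ℂ y) (hy' : Orthonormal ℂ y') : MargA p e f := by
  subst he hf
  intro i
  simp only [inner_vKron_eq_inner_partialInnerA,
    hy.sum_sq_norm_inner_of_card_eq_finrank (by simp),
    hy'.sum_sq_norm_inner_of_card_eq_finrank (by simp)]

theorem margB_of_isProductMeas {p : C4} {e f : Fin 2 × Fin 2 → C4} {x x' y : Fin 2 → C2}
    (he : IsProductMeas e x y) (hf : IsProductMeas f x' y)
    (hx : Orthonormal ℂ x) (hx' : Orthonormal ℂ x') : MargB p e f := by
  subst he hf
  intro j
  simp only [inner_vKron_eq_inner_partialInnerB,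
    hx.sum_sq_norm_inner_of_card_eq_finrank (by simp),
    hx'.sum_sq_norm_inner_of_card_eq_finrank (by simp)]

theorem stmt_3_general (a a' b b' : Fin 2 → C2)
    (ha : Orthonormal ℂ a) (ha' : Orthonormal ℂ a')
    (hb : Orthonormal ℂ b) (hb' : Orthonormal ℂ b')
    (p : C4)
    (eAB eAB' eA'B eA'B' : Fin 2 × Fin 2 → C4)
    (hthree :
      (IsProductMeas eAB a b ∧ IsProductMeas eAB' a b' ∧ IsProductMeas eA'B a' b) ∨
      (IsProductMeas eAB a b ∧ IsProductMeas eAB' a b' ∧ IsProductMeas eA'B' a' b') ∨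
      (IsProductMeas eAB a b ∧ IsProductMeas eA'B a' b ∧ IsProductMeas eA'B' a' b') ∨
      (IsProductMeas eAB' a b' ∧ IsProductMeas eA'B a' b ∧ IsProductMeas eA'B' a' b')) :
    (MargA p eAB eAB' ∧ MargB p eAB eA'B) ∨
    (MargA p eAB' eAB ∧ MargB p eAB' eA'B') ∨
    (MargA p eA'B eA'B' ∧ MargB p eA'B eAB) ∨
    (MargA p eA'B' eA'B ∧ MargB p eA'B' eAB') := by
  rcases hthree with ⟨hAB, hAB', hA'B⟩ | ⟨hAB, hAB', hA'B'⟩ | ⟨hAB, hA'B, hA'B'⟩ |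
    ⟨hAB', hA'B, hA'B'⟩
  · exact .inl ⟨margA_of_isProductMeas hAB hAB' hb hb', margB_of_isProductMeas hAB hA'B ha ha'⟩
  · exact .inr <| .inl
      ⟨margA_of_isProductMeas hAB' hAB hb' hb, margB_of_isProductMeas hAB' hA'B' ha ha'⟩
  · exact .inr <| .inr <| .inl
      ⟨margA_of_isProductMeas hA'B hA'B' hb hb', margB_of_isProductMeas hA'B hAB ha' ha⟩
  · exact .inr <| .inr <| .inr
      ⟨margA_of_isProductMeas hA'B' hA'B hb' hb, margB_of_isProductMeas hA'B' hAB' ha' ha⟩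

/-- Theorem 4 of the paper. In a Bell setup with orthonormal bases `a, a', b, b'` of `ℂ²`,
a unit state `p ∈ ℂ⁴` and four coincidence measurements `e_{AB}, e_{AB'}, e_{A'B}, e_{A'B'}`
(orthonormal bases of `ℂ⁴`): if at least three of the four measurements are product
measurements, then at least one of the four satisfies the marginal distribution law in `p`
with respect to each of its two partner measurements. Equivalently: if no measurement
satisfies the marginal distribution law, at least two measurements are entangled. -/
theorem stmt_3 (a a' b b' : Fin 2 → C2)
    (ha : Orthonormal ℂ a) (ha' : Orthonormal ℂ a')
    (hb : Orthonormal ℂ b) (hb' : Orthonormal ℂ b')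
    (p : C4) (hp : ‖p‖ = 1)
    (eAB eAB' eA'B eA'B' : Fin 2 × Fin 2 → C4)
    (hAB : Orthonormal ℂ eAB) (hAB' : Orthonormal ℂ eAB')
    (hA'B : Orthonormal ℂ eA'B) (hA'B' : Orthonormal ℂ eA'B')
    (hthree :
      (IsProductMeas eAB a b ∧ IsProductMeas eAB' a b' ∧ IsProductMeas eA'B a' b) ∨
      (IsProductMeas eAB a b ∧ IsProductMeas eAB' a b' ∧ IsProductMeas eA'B' a' b') ∨
      (IsProductMeas eAB a b ∧ IsProductMeas eA'B a' b ∧ IsProductMeas eA'B' a' b') ∨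
      (IsProductMeas eAB' a b' ∧ IsProductMeas eA'B a' b ∧ IsProductMeas eA'B' a' b')) :
    (MargA p eAB eAB' ∧ MargB p eAB eA'B) ∨
    (MargA p eAB' eAB ∧ MargB p eAB' eA'B') ∨
    (MargA p eA'B eA'B' ∧ MargB p eA'B eAB) ∨
    (MargA p eA'B' eA'B ∧ MargB p eA'B' eAB') :=
  stmt_3_general a a' b b' ha ha' hb hb' p eAB eAB' eA'B eA'B' hthree
end
end

section
/- If x, x', y, y' are real numbers with −1 ≤ x ≤ 1, −1 ≤ x' ≤ 1, −1 ≤ y ≤ 1, −1 ≤ y' ≤ 1, and Δ = x'y' + x'y + xy' − xy, then −2 ≤ Δ ≤ 2 (Lemma 1 of the paper). -/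
/-- Lemma 1 of the paper: if `x, x', y, y'` are real numbers in `[-1, 1]` and
`Δ = x'y' + x'y + xy' - xy`, then `-2 ≤ Δ ≤ 2`. -/
theorem stmt_4 (x x' y y' Δ : ℝ)
    (hx : -1 ≤ x ∧ x ≤ 1) (hx' : -1 ≤ x' ∧ x' ≤ 1)
    (hy : -1 ≤ y ∧ y ≤ 1) (hy' : -1 ≤ y' ∧ y' ≤ 1)
    (hΔ : Δ = x' * y' + x' * y + x * y' - x * y) :
    -2 ≤ Δ ∧ Δ ≤ 2 := by
  obtain ⟨h1, h2⟩ := hx; obtain ⟨h3, h4⟩ := hx'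
  obtain ⟨h5, h6⟩ := hy; obtain ⟨h7, h8⟩ := hy'
  subst hΔ
  constructor <;> nlinarith [mul_nonneg (by linarith : (0:ℝ) ≤ 1 - x) (by linarith : (0:ℝ) ≤ 1 - y), mul_nonneg (by linarith : (0:ℝ) ≤ 1 + x) (by linarith : (0:ℝ) ≤ 1 + y), mul_nonneg (by linarith : (0:ℝ) ≤ 1 - x') (by linarith : (0:ℝ) ≤ 1 - y'), mul_nonneg (by linarith : (0:ℝ) ≤ 1 + x') (by linarith : (0:ℝ) ≤ 1 + y'), mul_nonneg (by linarith : (0:ℝ) ≤ 1 - x) (by linarith : (0:ℝ) ≤ 1 + y), mul_nonneg (by linarith : (0:ℝ) ≤ 1 + x) (by linarith : (0:ℝ) ≤ 1 - y), mul_nonneg (by linarith : (0:ℝ) ≤ 1 - x') (by linarith : (0:ℝ) ≤ 1 + y'), mul_nonneg (by linarith : (0:ℝ) ≤ 1 + x') (by linarith : (0:ℝ) ≤ 1 - y')]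
end

section
/- Let A, A', B, B' be self-adjoint (Hermitian) 2×2 complex matrices each of operator norm at most 1, and let r_A, r_B ∈ ℂ² be unit vectors. Let 𝔅 := A ⊗ B' + A' ⊗ B' + A' ⊗ B − A ⊗ B (Kronecker products, a self-adjoint 4×4 matrix). Then the expectation value of 𝔅 in the product state r_A ⊗ r_B satisfies −2 ≤ Re⟨r_A ⊗ r_B, 𝔅 (r_A ⊗ r_B)⟩ ≤ 2. That is, the CHSH inequality holds for product measurements in a pure product state. -/
open scoped InnerProductSpace
open Matrix

noncomputable section

/-!
On a product state the expectation of `M ⊗ N` factorizes as `⟨r_A, M r_A⟩ ⟨r_B, N r_B⟩`.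
When `M` is Hermitian the first factor is real, so the real part of the Bell expectation is
`a b' + a' b' + a' b - a b` with `a, a', b, b' ∈ [-1, 1]` the real parts of the single-party
expectations, and `a (b' - b) + a' (b' + b)` has absolute value at most `|b' - b| + |b' + b| ≤ 2`.
-/

theorem inner_vKron_mKron (M N : Matrix (Fin 2) (Fin 2) ℂ) (x y : C2) :
    ⟪vKron x y, toEuclideanLin (mKron M N) (vKron x y)⟫_ℂ =
      ⟪x, toEuclideanLin M x⟫_ℂ * ⟪y, toEuclideanLin N y⟫_ℂ := by
  simp only [toLpLin_apply, PiLp.inner_apply, RCLike.inner_apply, vKron, mKron,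
    WithLp.equiv_symm_apply, mulVec, dotProduct, of_apply, Fin.sum_univ_four, Fin.sum_univ_two,
    Fin.isValue, Fin.coe_ofNat_eq_mod, Nat.reduceDiv, Nat.reduceMod, Fin.zero_eta, Fin.mk_one,
    map_mul]
  ring

theorem re_inner_vKron_mKron {M : Matrix (Fin 2) (Fin 2) ℂ} (hM : M.IsHermitian)
    (N : Matrix (Fin 2) (Fin 2) ℂ) (x y : C2) :
    (⟪vKron x y, toEuclideanLin (mKron M N) (vKron x y)⟫_ℂ).re =
      (⟪x, toEuclideanLin M x⟫_ℂ).re * (⟪y, toEuclideanLin N y⟫_ℂ).re := by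
  have hMx : (⟪x, toEuclideanLin M x⟫_ℂ).im = 0 :=
    (isSymmetric_toEuclideanLin_iff.mpr hM).im_inner_self_apply x
  rw [inner_vKron_mKron, Complex.mul_re, hMx, zero_mul, sub_zero]

theorem abs_chsh_le_two {a a' b b' : ℝ} (ha : |a| ≤ 1) (ha' : |a'| ≤ 1) (hb : |b| ≤ 1)
    (hb' : |b'| ≤ 1) : |a * b' + a' * b' + a' * b - a * b| ≤ 2 := by
  have hsum : |b' - b| + |b' + b| ≤ 2 := by
    rw [abs_le] at hb hb'
    rcases abs_cases (b' - b) with ⟨h₁, -⟩ | ⟨h₁, -⟩ <;>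
      rcases abs_cases (b' + b) with ⟨h₂, -⟩ | ⟨h₂, -⟩ <;> linarith
  calc |a * b' + a' * b' + a' * b - a * b| = |a * (b' - b) + a' * (b' + b)| := by ring_nf
    _ ≤ |a| * |b' - b| + |a'| * |b' + b| := by
      rw [← abs_mul, ← abs_mul]; exact abs_add_le _ _
    _ ≤ |b' - b| + |b' + b| :=
      add_le_add (mul_le_of_le_one_left (abs_nonneg _) ha)
        (mul_le_of_le_one_left (abs_nonneg _) ha')
    _ ≤ 2 := hsum

theorem abs_re_inner_self_apply_le_one {𝕜 E : Type*} [RCLike 𝕜] [NormedAddCommGroup E]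
    [InnerProductSpace 𝕜 E] {T : E →ₗ[𝕜] E} (hT : ∀ v, ‖T v‖ ≤ ‖v‖) {x : E} (hx : ‖x‖ = 1) :
    |RCLike.re ⟪x, T x⟫_𝕜| ≤ 1 :=
  calc |RCLike.re ⟪x, T x⟫_𝕜| ≤ ‖⟪x, T x⟫_𝕜‖ := RCLike.abs_re_le_norm _
    _ ≤ ‖x‖ * ‖T x‖ := norm_inner_le_norm _ _
    _ ≤ ‖x‖ * ‖x‖ := by gcongr; exact hT x
    _ = 1 := by rw [hx, one_mul]

theorem stmt_5_general (A A' B B' : Matrix (Fin 2) (Fin 2) ℂ)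
    (hA : A.IsHermitian) (hA' : A'.IsHermitian)
    (hAn : ∀ v : C2, ‖Matrix.toEuclideanLin A v‖ ≤ ‖v‖)
    (hA'n : ∀ v : C2, ‖Matrix.toEuclideanLin A' v‖ ≤ ‖v‖)
    (hBn : ∀ v : C2, ‖Matrix.toEuclideanLin B v‖ ≤ ‖v‖)
    (hB'n : ∀ v : C2, ‖Matrix.toEuclideanLin B' v‖ ≤ ‖v‖)
    (rA rB : C2) (hrA : ‖rA‖ = 1) (hrB : ‖rB‖ = 1)
    (𝔅 : Matrix (Fin 4) (Fin 4) ℂ)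
    (h𝔅 : 𝔅 = mKron A B' + mKron A' B' + mKron A' B - mKron A B) :
    -2 ≤ (⟪vKron rA rB, Matrix.toEuclideanLin 𝔅 (vKron rA rB)⟫_ℂ).re ∧
      (⟪vKron rA rB, Matrix.toEuclideanLin 𝔅 (vKron rA rB)⟫_ℂ).re ≤ 2 := by
  subst h𝔅
  simp only [map_add, map_sub, LinearMap.add_apply, LinearMap.sub_apply, inner_add_right,
    inner_sub_right, Complex.add_re, Complex.sub_re, re_inner_vKron_mKron hA,
    re_inner_vKron_mKron hA']
  exact abs_le.mp <| abs_chsh_le_two (abs_re_inner_self_apply_le_one hAn hrA)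
    (abs_re_inner_self_apply_le_one hA'n hrA) (abs_re_inner_self_apply_le_one hBn hrB)
    (abs_re_inner_self_apply_le_one hB'n hrB)

/-- The CHSH inequality holds for product measurements in a pure product state:
for self-adjoint 2×2 matrices `A, A', B, B'` of operator norm at most 1 and unit vectors
`r_A, r_B ∈ ℂ²`, the Bell operator `𝔅 = A⊗B' + A'⊗B' + A'⊗B − A⊗B` satisfies
`−2 ≤ Re⟨r_A ⊗ r_B, 𝔅 (r_A ⊗ r_B)⟩ ≤ 2`. -/
theorem stmt_5 (A A' B B' : Matrix (Fin 2) (Fin 2) ℂ)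
    (hA : A.IsHermitian) (hA' : A'.IsHermitian) (hB : B.IsHermitian) (hB' : B'.IsHermitian)
    (hAn : ∀ v : C2, ‖Matrix.toEuclideanLin A v‖ ≤ ‖v‖)
    (hA'n : ∀ v : C2, ‖Matrix.toEuclideanLin A' v‖ ≤ ‖v‖)
    (hBn : ∀ v : C2, ‖Matrix.toEuclideanLin B v‖ ≤ ‖v‖)
    (hB'n : ∀ v : C2, ‖Matrix.toEuclideanLin B' v‖ ≤ ‖v‖)
    (rA rB : C2) (hrA : ‖rA‖ = 1) (hrB : ‖rB‖ = 1)
    (𝔅 : Matrix (Fin 4) (Fin 4) ℂ)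
    (h𝔅 : 𝔅 = mKron A B' + mKron A' B' + mKron A' B - mKron A B) :
    -2 ≤ (⟪vKron rA rB, Matrix.toEuclideanLin 𝔅 (vKron rA rB)⟫_ℂ).re ∧
      (⟪vKron rA rB, Matrix.toEuclideanLin 𝔅 (vKron rA rB)⟫_ℂ).re ≤ 2 :=
  stmt_5_general A A' B B' hA hA' hAn hA'n hBn hB'n rA rB hrA hrB 𝔅 h𝔅
end
end

section
/- Let A, A', B, B' be self-adjoint (Hermitian) 2×2 complex matrices each of operator norm at most 1. Let (rᵢ)_{i∈I} and (sᵢ)_{i∈I} be finite families of unit vectors in ℂ², and (wᵢ)_{i∈I} nonnegative reals with Σᵢ wᵢ = 1, and let ρ := Σᵢ wᵢ · (rᵢrᵢ*) ⊗ (sᵢsᵢ*) (a density matrix representing a mixture of product states). Let 𝔅 := A ⊗ B' + A' ⊗ B' + A' ⊗ B − A ⊗ B. Then −2 ≤ Re(Tr(ρ · 𝔅)) ≤ 2. That is, the CHSH inequality is satisfied for product measurements in any mixture of product states. -/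
open scoped InnerProductSpace
open Matrix

noncomputable section

lemma trace_mKron (M N : Matrix (Fin 2) (Fin 2) ℂ) :
    (mKron M N).trace = M.trace * N.trace := by
  simp [Matrix.trace, mKron, Fin.sum_univ_four, Fin.sum_univ_two, Matrix.diag,
    show ((3:Fin 4)).val = 3 from rfl]
  ring

lemma mKron_mul (M N P Q : Matrix (Fin 2) (Fin 2) ℂ) :
    mKron M N * mKron P Q = mKron (M * P) (N * Q) := by
  ext i j
  fin_cases i <;> fin_cases j <;>
    simp [mKron, Matrix.mul_apply, Fin.sum_univ_four, Fin.sum_univ_two,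
      show ((3:Fin 4)).val = 3 from rfl] <;> ring

lemma trace_rankOne_mul (u : C2) (M : Matrix (Fin 2) (Fin 2) ℂ) :
    (rankOne u * M).trace = ⟪u, Matrix.toEuclideanLin M u⟫_ℂ := by
  simp [Matrix.trace, Matrix.mul_apply, rankOne, PiLp.inner_apply, Matrix.toEuclideanLin_apply,
    Matrix.mulVec, dotProduct, Fin.sum_univ_two, Matrix.diag]
  ring

lemma key (M : Matrix (Fin 2) (Fin 2) ℂ) (hM : M.IsHermitian)
    (hMn : ∀ v : C2, ‖Matrix.toEuclideanLin M v‖ ≤ ‖v‖) (u : C2) (hu : ‖u‖ = 1) :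
    (rankOne u * M).trace = (((rankOne u * M).trace.re : ℝ) : ℂ) ∧
      |(rankOne u * M).trace.re| ≤ 1 := by
  rw [trace_rankOne_mul]
  have hsymm : (Matrix.toEuclideanLin M).IsSymmetric :=
    (Matrix.isHermitian_iff_isSymmetric.mp hM)
  have hreal : (starRingEnd ℂ) ⟪u, Matrix.toEuclideanLin M u⟫_ℂ
      = ⟪u, Matrix.toEuclideanLin M u⟫_ℂ := by
    rw [inner_conj_symm, hsymm]
  constructor
  · exact (Complex.conj_eq_iff_re.mp hreal).symm
  · have h1 : ‖⟪u, Matrix.toEuclideanLin M u⟫_ℂ‖ ≤ 1 := by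
      calc ‖⟪u, Matrix.toEuclideanLin M u⟫_ℂ‖ ≤ ‖u‖ * ‖Matrix.toEuclideanLin M u‖ :=
        norm_inner_le_norm u _
      _ ≤ 1 * 1 := by
          have := hMn u
          rw [hu] at this ⊢
          exact mul_le_mul le_rfl this (norm_nonneg _) zero_le_one
      _ = 1 := by ring
    calc |(⟪u, Matrix.toEuclideanLin M u⟫_ℂ).re| ≤ ‖⟪u, Matrix.toEuclideanLin M u⟫_ℂ‖ :=
      Complex.abs_re_le_norm _
    _ ≤ 1 := h1

/-- The CHSH inequality holds for product measurements in any mixture of product states: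
for self-adjoint 2×2 matrices `A, A', B, B'` of operator norm at most 1, unit vectors
`rᵢ, sᵢ ∈ ℂ²`, weights `wᵢ ≥ 0` with `Σᵢ wᵢ = 1`, and the density matrix
`ρ = Σᵢ wᵢ · (rᵢrᵢ*) ⊗ (sᵢsᵢ*)`, the Bell operator `𝔅 = A⊗B' + A'⊗B' + A'⊗B − A⊗B`
satisfies `−2 ≤ Re(Tr(ρ·𝔅)) ≤ 2`. -/
theorem stmt_6 {I : Type*} [Fintype I]
    (A A' B B' : Matrix (Fin 2) (Fin 2) ℂ)
    (hA : A.IsHermitian) (hA' : A'.IsHermitian) (hB : B.IsHermitian) (hB' : B'.IsHermitian)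
    (hAn : ∀ v : C2, ‖Matrix.toEuclideanLin A v‖ ≤ ‖v‖)
    (hA'n : ∀ v : C2, ‖Matrix.toEuclideanLin A' v‖ ≤ ‖v‖)
    (hBn : ∀ v : C2, ‖Matrix.toEuclideanLin B v‖ ≤ ‖v‖)
    (hB'n : ∀ v : C2, ‖Matrix.toEuclideanLin B' v‖ ≤ ‖v‖)
    (r s : I → C2) (hr : ∀ i, ‖r i‖ = 1) (hs : ∀ i, ‖s i‖ = 1)
    (w : I → ℝ) (hw : ∀ i, 0 ≤ w i) (hw1 : ∑ i, w i = 1)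
    (ρ : Matrix (Fin 4) (Fin 4) ℂ)
    (hρ : ρ = ∑ i, (w i : ℂ) • mKron (rankOne (r i)) (rankOne (s i)))
    (𝔅 : Matrix (Fin 4) (Fin 4) ℂ)
    (h𝔅 : 𝔅 = mKron A B' + mKron A' B' + mKron A' B - mKron A B) :
    -2 ≤ (Matrix.trace (ρ * 𝔅)).re ∧ (Matrix.trace (ρ * 𝔅)).re ≤ 2 := by
  set a : I → ℝ := fun i => (rankOne (r i) * A).trace.re with ha_def
  set a' : I → ℝ := fun i => (rankOne (r i) * A').trace.re with ha'_def
  set b : I → ℝ := fun i => (rankOne (s i) * B).trace.re with hb_def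
  set b' : I → ℝ := fun i => (rankOne (s i) * B').trace.re with hb'_def
  have hkA := fun i => key A hA hAn (r i) (hr i)
  have hkA' := fun i => key A' hA' hA'n (r i) (hr i)
  have hkB := fun i => key B hB hBn (s i) (hs i)
  have hkB' := fun i => key B' hB' hB'n (s i) (hs i)
  have htrace : (ρ * 𝔅).trace
      = ∑ i, ((w i * (a i * b' i + a' i * b' i + a' i * b i - a i * b i) : ℝ) : ℂ) := by
    subst hρ h𝔅
    rw [Finset.sum_mul, Matrix.trace_sum]
    refine Finset.sum_congr rfl fun i _ => ?_
    rw [Matrix.smul_mul, Matrix.trace_smul]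
    rw [Matrix.mul_sub, Matrix.mul_add, Matrix.mul_add, Matrix.trace_sub, Matrix.trace_add,
      Matrix.trace_add, mKron_mul, mKron_mul, mKron_mul, mKron_mul,
      trace_mKron, trace_mKron, trace_mKron, trace_mKron,
      (hkA i).1, (hkA' i).1, (hkB i).1, (hkB' i).1]
    push_cast [smul_eq_mul]
    ring
  have hre : (ρ * 𝔅).trace.re
      = ∑ i, w i * (a i * b' i + a' i * b' i + a' i * b i - a i * b i) := by
    rw [htrace, ← Complex.ofReal_sum, Complex.ofReal_re]
  have hbound : ∀ i, |a i * b' i + a' i * b' i + a' i * b i - a i * b i| ≤ 2 := by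
    intro i
    obtain ⟨ha1, ha2⟩ := abs_le.mp (hkA i).2
    obtain ⟨ha'1, ha'2⟩ := abs_le.mp (hkA' i).2
    obtain ⟨hb1, hb2⟩ := abs_le.mp (hkB i).2
    obtain ⟨hb'1, hb'2⟩ := abs_le.mp (hkB' i).2
    rw [abs_le]
    constructor <;>
    nlinarith [mul_nonneg (by linarith : (0:ℝ) ≤ 1 - a i) (by linarith : (0:ℝ) ≤ 1 - b' i),
      mul_nonneg (by linarith : (0:ℝ) ≤ 1 + a i) (by linarith : (0:ℝ) ≤ 1 + b' i),
      mul_nonneg (by linarith : (0:ℝ) ≤ 1 - a i) (by linarith : (0:ℝ) ≤ 1 + b' i),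
      mul_nonneg (by linarith : (0:ℝ) ≤ 1 + a i) (by linarith : (0:ℝ) ≤ 1 - b' i),
      mul_nonneg (by linarith : (0:ℝ) ≤ 1 - a' i) (by linarith : (0:ℝ) ≤ 1 - b i),
      mul_nonneg (by linarith : (0:ℝ) ≤ 1 + a' i) (by linarith : (0:ℝ) ≤ 1 + b i),
      mul_nonneg (by linarith : (0:ℝ) ≤ 1 - a' i) (by linarith : (0:ℝ) ≤ 1 + b i),
      mul_nonneg (by linarith : (0:ℝ) ≤ 1 + a' i) (by linarith : (0:ℝ) ≤ 1 - b i),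
      mul_nonneg (by linarith : (0:ℝ) ≤ 1 - a i) (by linarith : (0:ℝ) ≤ 1 - b i),
      mul_nonneg (by linarith : (0:ℝ) ≤ 1 + a i) (by linarith : (0:ℝ) ≤ 1 + b i),
      mul_nonneg (by linarith : (0:ℝ) ≤ 1 - a i) (by linarith : (0:ℝ) ≤ 1 + b i),
      mul_nonneg (by linarith : (0:ℝ) ≤ 1 + a i) (by linarith : (0:ℝ) ≤ 1 - b i),
      mul_nonneg (by linarith : (0:ℝ) ≤ 1 - a' i) (by linarith : (0:ℝ) ≤ 1 - b' i),
      mul_nonneg (by linarith : (0:ℝ) ≤ 1 + a' i) (by linarith : (0:ℝ) ≤ 1 + b' i),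
      mul_nonneg (by linarith : (0:ℝ) ≤ 1 - a' i) (by linarith : (0:ℝ) ≤ 1 + b' i),
      mul_nonneg (by linarith : (0:ℝ) ≤ 1 + a' i) (by linarith : (0:ℝ) ≤ 1 - b' i)]
  rw [hre]
  constructor
  · calc (-2 : ℝ) = ∑ i, w i * (-2) := by rw [← Finset.sum_mul, hw1]; ring
    _ ≤ ∑ i, w i * (a i * b' i + a' i * b' i + a' i * b i - a i * b i) :=
      Finset.sum_le_sum fun i _ =>
        mul_le_mul_of_nonneg_left (neg_le_of_abs_le (hbound i)) (hw i)
  · calc ∑ i, w i * (a i * b' i + a' i * b' i + a' i * b i - a i * b i)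
        ≤ ∑ i, w i * 2 :=
      Finset.sum_le_sum fun i _ =>
        mul_le_mul_of_nonneg_left (le_of_abs_le (hbound i)) (hw i)
    _ = 2 := by rw [← Finset.sum_mul, hw1]; ring
end
end

section
/- Let α, β ∈ ℝ and set a := e^{iα}/√2, b := e^{iβ}/√2, p := (0, a, b, 0) ∈ ℂ⁴, w₊ := (0, a, b, 0), w₋ := (0, a, −b, 0), and let e₁ = (1,0,0,0), e₂ = (0,1,0,0), e₃ = (0,0,1,0), e₄ = (0,0,0,1) be the canonical basis. Define the self-adjoint operators E_{AB} := e₁e₁* − e₂e₂* − e₃e₃* + e₄e₄*, E_{AB'} := w₊w₊* − w₋w₋* − e₁e₁* + e₄e₄*, E_{A'B} := w₊w₊* − e₁e₁* − w₋w₋* + e₄e₄*, and E_{A'B'} := w₊w₊* − e₁e₁* − e₄e₄* + w₋w₋*. Then p is a unit vector and the CHSH expression satisfies ⟨p, (E_{AB'} + E_{A'B} + E_{A'B'} − E_{AB}) p⟩ = 4. In particular, this quantum model violates the CHSH inequality beyond Tsirelson's bound 2√2, with value 4. -/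
open scoped InnerProductSpace
open Matrix

noncomputable section

/-! The CHSH operator collapses to `3 w₊w₊* − w₋w₋* − 4 e₁e₁* + e₂e₂* + e₃e₃*`, and
`⟨p, uu* p⟩ = |⟨u, p⟩|²`. Since `p = w₊` is a unit vector, `w₋ ⟂ p` (because
`|a| = |b|`), `e₁ ⟂ p`, and `|⟨e₂, p⟩|² = |a|² = 1/2 = |b|² = |⟨e₃, p⟩|²`,
the value is `3 + 1/2 + 1/2 = 4`. -/

theorem toEuclideanLin_rankOne_apply {n : ℕ} (u v : EuclideanSpace ℂ (Fin n)) :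
    Matrix.toEuclideanLin (rankOne u) v = ⟪u, v⟫_ℂ • u := by
  ext i
  simp [rankOne, Matrix.mulVec, dotProduct, PiLp.inner_apply, Finset.mul_sum, mul_comm,
    mul_left_comm]

theorem inner_toEuclideanLin_rankOne_self {n : ℕ} (u v : EuclideanSpace ℂ (Fin n)) :
    ⟪v, Matrix.toEuclideanLin (rankOne u) v⟫_ℂ = (‖⟪u, v⟫_ℂ‖ ^ 2 : ℝ) := by
  rw [toEuclideanLin_rankOne_apply, inner_smul_right, ← inner_conj_symm v u,
    Complex.mul_conj']
  push_cast
  rfl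

theorem inner_vec4 (a b c d a' b' c' d' : ℂ) :
    ⟪vec4 a b c d, vec4 a' b' c' d'⟫_ℂ =
      star a * a' + star b * b' + star c * c' + star d * d' := by
  simp only [vec4, PiLp.inner_apply, Fin.sum_univ_four, RCLike.inner_apply]
  simp [mul_comm]

theorem norm_vec4_sq (a b c d : ℂ) :
    ‖vec4 a b c d‖ ^ 2 = ‖a‖ ^ 2 + ‖b‖ ^ 2 + ‖c‖ ^ 2 + ‖d‖ ^ 2 := by
  simp [vec4, EuclideanSpace.norm_sq_eq, Fin.sum_univ_four]

theorem norm_exp_mul_I_div_sqrt_two_sq (θ : ℝ) :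
    ‖Complex.exp (θ * Complex.I) / Real.sqrt 2‖ ^ 2 = 1 / 2 := by
  rw [norm_div, Complex.norm_exp_ofReal_mul_I, div_pow]
  simp

/-- The quantum model of the nonlocal non-marginal box situation 2 violates the CHSH
inequality with the maximal algebraic value 4, beyond Tsirelson's bound `2√2`:
with `a = e^{iα}/√2`, `b = e^{iβ}/√2`, `p = (0,a,b,0)`, `w₊ = (0,a,b,0)`, `w₋ = (0,a,−b,0)`
and the expectation-value operators `E_{AB} = e₁e₁* − e₂e₂* − e₃e₃* + e₄e₄*`,
`E_{AB'} = w₊w₊* − w₋w₋* − e₁e₁* + e₄e₄*`, `E_{A'B} = w₊w₊* − e₁e₁* − w₋w₋* + e₄e₄*`,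
`E_{A'B'} = w₊w₊* − e₁e₁* − e₄e₄* + w₋w₋*`, the state `p` is a unit vector and
`⟨p, (E_{AB'} + E_{A'B} + E_{A'B'} − E_{AB}) p⟩ = 4`. -/
theorem stmt_9 (α β : ℝ) (a b : ℂ)
    (ha : a = Complex.exp (α * Complex.I) / Real.sqrt 2)
    (hb : b = Complex.exp (β * Complex.I) / Real.sqrt 2)
    (p wp wm e1 e2 e3 e4 : C4)
    (hp : p = vec4 0 a b 0) (hwp : wp = vec4 0 a b 0) (hwm : wm = vec4 0 a (-b) 0)
    (he1 : e1 = vec4 1 0 0 0) (he2 : e2 = vec4 0 1 0 0)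
    (he3 : e3 = vec4 0 0 1 0) (he4 : e4 = vec4 0 0 0 1)
    (EAB EAB' EA'B EA'B' : Matrix (Fin 4) (Fin 4) ℂ)
    (hEAB : EAB = rankOne e1 - rankOne e2 - rankOne e3 + rankOne e4)
    (hEAB' : EAB' = rankOne wp - rankOne wm - rankOne e1 + rankOne e4)
    (hEA'B : EA'B = rankOne wp - rankOne e1 - rankOne wm + rankOne e4)
    (hEA'B' : EA'B' = rankOne wp - rankOne e1 - rankOne e4 + rankOne wm) :
    ‖p‖ = 1 ∧
      ⟪p, Matrix.toEuclideanLin (EAB' + EA'B + EA'B' - EAB) p⟫_ℂ = 4 := by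
  have ha2 : ‖a‖ ^ 2 = 1 / 2 := ha ▸ norm_exp_mul_I_div_sqrt_two_sq α
  have hb2 : ‖b‖ ^ 2 = 1 / 2 := hb ▸ norm_exp_mul_I_div_sqrt_two_sq β
  subst hp hwp hwm he1 he2 he3 he4 hEAB hEAB' hEA'B hEA'B'
  have hnorm : ‖vec4 0 a b 0‖ = 1 := by
    rw [← pow_eq_one_iff_of_nonneg (norm_nonneg _) two_ne_zero, norm_vec4_sq, ha2, hb2]
    norm_num
  have hwm_orth : ⟪vec4 0 a (-b) 0, vec4 0 a b 0⟫_ℂ = 0 := by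
    simp only [inner_vec4, star_zero, star_neg, zero_mul, add_zero, zero_add, neg_mul,
      ← sub_eq_add_neg, Complex.star_def, Complex.conj_mul', sub_eq_zero]
    exact_mod_cast ha2.trans hb2.symm
  refine ⟨hnorm, ?_⟩
  simp only [map_add, map_sub, LinearMap.add_apply, LinearMap.sub_apply, inner_add_right,
    inner_sub_right, inner_toEuclideanLin_rankOne_self]
  rw [inner_self_eq_norm_sq_to_K, hnorm]
  norm_num [hwm_orth, inner_vec4, ha2, hb2]
end
end

section
/- Let α, β ∈ ℝ and set a := e^{iα}/√2, b := e^{iβ}/√2, p := (0, a, b, 0) ∈ ℂ⁴, w₊ := (0, a, b, 0), w₋ := (0, a, −b, 0), and let e₁, e₂, e₃, e₄ be the canonical basis of ℂ⁴. Consider the coincidence measurement e_{AB} given by the orthonormal basis {e₁, e₂, e₃, e₄} (with w₁₁ = e₁, w₁₂ = e₂, w₂₁ = e₃, w₂₂ = e₄) and the coincidence measurement e_{AB'} given by the orthonormal basis {w₊, w₋, e₁, e₄} (with w'₁₁ = w₊, w'₁₂ = w₋, w'₂₁ = e₁, w'₂₂ = e₄). Then the marginal distribution law is violated in the state p: |⟨w₁₁,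 p⟩|² + |⟨w₁₂, p⟩|² = 1/2, while |⟨w'₁₁, p⟩|² + |⟨w'₁₂, p⟩|² = 1. -/
open scoped InnerProductSpace
open Matrix

noncomputable section

theorem stmt_10_general (α β : ℝ) (a b : ℂ)
    (ha : a = Complex.exp (α * Complex.I) / Real.sqrt 2)
    (hb : b = Complex.exp (β * Complex.I) / Real.sqrt 2)
    (p wp wm e1 e2 : C4)
    (hp : p = vec4 0 a b 0) (hwp : wp = vec4 0 a b 0) (hwm : wm = vec4 0 a (-b) 0)
    (he1 : e1 = vec4 1 0 0 0) (he2 : e2 = vec4 0 1 0 0) :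
    ‖⟪e1, p⟫_ℂ‖ ^ 2 + ‖⟪e2, p⟫_ℂ‖ ^ 2 = 1 / 2 ∧
      ‖⟪wp, p⟫_ℂ‖ ^ 2 + ‖⟪wm, p⟫_ℂ‖ ^ 2 = 1 := by
  have hna : ‖a‖ ^ 2 = 1 / 2 := ha ▸ norm_exp_mul_I_div_sqrt_two_sq α
  have hnb : ‖b‖ ^ 2 = 1 / 2 := hb ▸ norm_exp_mul_I_div_sqrt_two_sq β
  subst hp hwp hwm he1 he2
  simp only [inner_vec4, star_zero, star_one, star_neg, zero_mul, mul_zero, one_mul, add_zero,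
    zero_add, neg_mul, ← sub_eq_add_neg, RCLike.star_def, Complex.conj_mul']
  norm_cast
  rw [hna, hnb]
  norm_num

/-- In the nonlocal non-marginal box model, the marginal distribution law is violated in
the state `p = (0, e^{iα}/√2, e^{iβ}/√2, 0)`: for the coincidence measurement `e_{AB}`
with basis `{e₁,e₂,e₃,e₄}` (with `w₁₁ = e₁`, `w₁₂ = e₂`) and the coincidence measurement
`e_{AB'}` with basis `{w₊, w₋, e₁, e₄}` (with `w'₁₁ = w₊`, `w'₁₂ = w₋`), one has
`|⟨w₁₁, p⟩|² + |⟨w₁₂, p⟩|² = 1/2` while `|⟨w'₁₁, p⟩|² + |⟨w'₁₂, p⟩|² = 1`. -/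
theorem stmt_10 (α β : ℝ) (a b : ℂ)
    (ha : a = Complex.exp (α * Complex.I) / Real.sqrt 2)
    (hb : b = Complex.exp (β * Complex.I) / Real.sqrt 2)
    (p wp wm e1 e2 e3 e4 : C4)
    (hp : p = vec4 0 a b 0) (hwp : wp = vec4 0 a b 0) (hwm : wm = vec4 0 a (-b) 0)
    (he1 : e1 = vec4 1 0 0 0) (he2 : e2 = vec4 0 1 0 0)
    (he3 : e3 = vec4 0 0 1 0) (he4 : e4 = vec4 0 0 0 1) :
    ‖⟪e1, p⟫_ℂ‖ ^ 2 + ‖⟪e2, p⟫_ℂ‖ ^ 2 = 1 / 2 ∧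
      ‖⟪wp, p⟫_ℂ‖ ^ 2 + ‖⟪wm, p⟫_ℂ‖ ^ 2 = 1 :=
  stmt_10_general α β a b ha hb p wp wm e1 e2 hp hwp hwm he1 he2
end
end
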